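/- arXiv:1503.05529 — 4 statements merged into one kernel-verified Lean document; each statement's English description precedes it below -/
import Mathlib

section
/- Let F be a field of characteristic 7 and let V be the 7-dimensional F-vector space with basis m_0, ..., m_6. Define a bilinear product on V by m_i · m_j = c(i,j) m_{i+j-3} where indices are taken modulo 7 and c(i,j) = 2(j-i)(4i+j-1)(4j+i-1) in F_7 ⊆ F. Define endomorphisms e_{-1}, e_0, e_1 of V by e_{-1}(m_i) = i·m_{i-1} for 1 ≤ i ≤ 6 with e_{-1}(m_0)=0, e_0(m_i) = (i+4)m_i, and e_1(m_i) = (i+1)m_{i+1} for 0 ≤ i ≤ 5 with e_1(m_6)=0. Then e_{-1}, e_0, e_1 are derivations of the algebra (V, ·). -/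
/-- The function `c(i,j) = 2(j-i)(4i+j-1)(4j+i-1)` on `F_7 = ZMod 7`. -/
def cfun (i j : ZMod 7) : ZMod 7 := 2 * (j - i) * (4 * i + j - 1) * (4 * j + i - 1)

/-- The canonical embedding of `F_7` into a field of characteristic `7`. -/
def cst (F : Type*) [Field F] [CharP F 7] : ZMod 7 →+* F := ZMod.castHom dvd_rfl F

/-- The bilinear product on `V = F^7` (with basis `m_0, ..., m_6`) determined by
`m_i · m_j = c(i,j) m_{i+j-3}`, indices modulo 7. -/
def mulV (F : Type*) [Field F] [CharP F 7] (u v : Fin 7 → F) : Fin 7 → F := fun t =>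
  ∑ i : Fin 7, ∑ j : Fin 7,
    if ((i : ℕ) : ZMod 7) + ((j : ℕ) : ZMod 7) - 3 = ((t : ℕ) : ZMod 7) then
      cst F (cfun ((i : ℕ) : ZMod 7) ((j : ℕ) : ZMod 7)) * u i * v j
    else 0

/-- The operator `e_k`, determined by `e_k(m_i) = (i+4k+4) m_{i+k}` if `0 ≤ i+k ≤ 6`
and `e_k(m_i) = 0` otherwise.  For `k = -1` this is `e_{-1}(m_i) = i m_{i-1}`
(`e_{-1}(m_0) = 0`), for `k = 0` it is `e_0(m_i) = (i+4) m_i`, and for `k = 1` it is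
`e_1(m_i) = (i+1) m_{i+1}` (`e_1(m_6) = 0`). -/
def eOp (F : Type*) [Field F] [CharP F 7] (k : ℤ) (u : Fin 7 → F) : Fin 7 → F := fun t =>
  ∑ i : Fin 7,
    if (i : ℤ) + k = (t : ℤ) then
      cst F (((i : ℕ) : ZMod 7) + 4 * (k : ZMod 7) + 4) * u i
    else 0

/-- Coefficient of the product. -/
def Cc (i j t : Fin 7) : ZMod 7 :=
  if ((i : ℕ) : ZMod 7) + ((j : ℕ) : ZMod 7) - 3 = ((t : ℕ) : ZMod 7) then
    cfun ((i : ℕ) : ZMod 7) ((j : ℕ) : ZMod 7) else 0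

/-- Coefficient of `eOp`. -/
def Ec (k : ℤ) (i t : Fin 7) : ZMod 7 :=
  if (i : ℤ) + k = (t : ℤ) then ((i : ℕ) : ZMod 7) + 4 * (k : ZMod 7) + 4 else 0

lemma mulV_eq (F : Type*) [Field F] [CharP F 7] (u v : Fin 7 → F) (t : Fin 7) :
    mulV F u v t = ∑ i : Fin 7, ∑ j : Fin 7, cst F (Cc i j t) * u i * v j := by
  refine Finset.sum_congr rfl fun i _ => Finset.sum_congr rfl fun j _ => ?_
  unfold Cc; split <;> simp

lemma eOp_eq (F : Type*) [Field F] [CharP F 7] (k : ℤ) (u : Fin 7 → F) (t : Fin 7) :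
    eOp F k u t = ∑ i : Fin 7, cst F (Ec k i t) * u i := by
  refine Finset.sum_congr rfl fun i _ => ?_
  unfold Ec; split <;> simp

lemma key : ∀ k ∈ ({-1, 0, 1} : Set ℤ), ∀ i j t : Fin 7,
    (∑ s : Fin 7, Ec k s t * Cc i j s) =
      (∑ s : Fin 7, Cc s j t * Ec k i s) + ∑ s : Fin 7, Cc i s t * Ec k j s := by
  rintro k (rfl | rfl | rfl) <;> decide

/-- `e_{-1}`, `e_0` and `e_1` are derivations of `(V, ·)`. -/
theorem stmt3 (F : Type*) [Field F] [CharP F 7] :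
    ∀ k ∈ ({-1, 0, 1} : Set ℤ), ∀ u v : Fin 7 → F,
      eOp F k (mulV F u v) = mulV F (eOp F k u) v + mulV F u (eOp F k v) := by
  intro k hk u v
  funext t
  have hL : eOp F k (mulV F u v) t =
      ∑ i : Fin 7, ∑ j : Fin 7, cst F (∑ s : Fin 7, Ec k s t * Cc i j s) * u i * v j := by
    rw [eOp_eq]
    calc ∑ s : Fin 7, cst F (Ec k s t) * mulV F u v s
        = ∑ s : Fin 7, ∑ i : Fin 7, ∑ j : Fin 7,
            cst F (Ec k s t) * (cst F (Cc i j s) * u i * v j) := by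
          refine Finset.sum_congr rfl fun s _ => ?_
          rw [mulV_eq, Finset.mul_sum]
          exact Finset.sum_congr rfl fun i _ => Finset.mul_sum _ _ _
      _ = ∑ i : Fin 7, ∑ j : Fin 7, ∑ s : Fin 7,
            cst F (Ec k s t) * (cst F (Cc i j s) * u i * v j) := by
          rw [Finset.sum_comm]
          exact Finset.sum_congr rfl fun i _ => Finset.sum_comm
      _ = _ := by
          refine Finset.sum_congr rfl fun i _ => Finset.sum_congr rfl fun j _ => ?_
          rw [map_sum, Finset.sum_mul, Finset.sum_mul]
          refine Finset.sum_congr rfl fun s _ => ?_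
          rw [map_mul]; ring
  have hR1 : mulV F (eOp F k u) v t =
      ∑ i : Fin 7, ∑ j : Fin 7, cst F (∑ s : Fin 7, Cc s j t * Ec k i s) * u i * v j := by
    rw [mulV_eq]
    calc ∑ s : Fin 7, ∑ j : Fin 7, cst F (Cc s j t) * eOp F k u s * v j
        = ∑ s : Fin 7, ∑ j : Fin 7, ∑ i : Fin 7,
            cst F (Cc s j t) * (cst F (Ec k i s) * u i) * v j := by
          refine Finset.sum_congr rfl fun s _ => Finset.sum_congr rfl fun j _ => ?_
          rw [eOp_eq, Finset.mul_sum, Finset.sum_mul]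
      _ = ∑ i : Fin 7, ∑ j : Fin 7, ∑ s : Fin 7,
            cst F (Cc s j t) * (cst F (Ec k i s) * u i) * v j := by
          have h1 : ∀ s : Fin 7, ∑ j : Fin 7, ∑ i : Fin 7,
              cst F (Cc s j t) * (cst F (Ec k i s) * u i) * v j
              = ∑ i : Fin 7, ∑ j : Fin 7,
              cst F (Cc s j t) * (cst F (Ec k i s) * u i) * v j :=
            fun s => Finset.sum_comm
          simp only [h1]
          rw [Finset.sum_comm]
          exact Finset.sum_congr rfl fun i _ => Finset.sum_comm
      _ = _ := by
          refine Finset.sum_congr rfl fun i _ => Finset.sum_congr rfl fun j _ => ?_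
          rw [map_sum, Finset.sum_mul, Finset.sum_mul]
          refine Finset.sum_congr rfl fun s _ => ?_
          rw [map_mul]; ring
  have hR2 : mulV F u (eOp F k v) t =
      ∑ i : Fin 7, ∑ j : Fin 7, cst F (∑ s : Fin 7, Cc i s t * Ec k j s) * u i * v j := by
    rw [mulV_eq]
    calc ∑ i : Fin 7, ∑ s : Fin 7, cst F (Cc i s t) * u i * eOp F k v s
        = ∑ i : Fin 7, ∑ s : Fin 7, ∑ j : Fin 7,
            cst F (Cc i s t) * u i * (cst F (Ec k j s) * v j) := by
          refine Finset.sum_congr rfl fun i _ => Finset.sum_congr rfl fun s _ => ?_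
          rw [eOp_eq, Finset.mul_sum]
      _ = ∑ i : Fin 7, ∑ j : Fin 7, ∑ s : Fin 7,
            cst F (Cc i s t) * u i * (cst F (Ec k j s) * v j) := by
          exact Finset.sum_congr rfl fun i _ => Finset.sum_comm
      _ = _ := by
          refine Finset.sum_congr rfl fun i _ => Finset.sum_congr rfl fun j _ => ?_
          rw [map_sum, Finset.sum_mul, Finset.sum_mul]
          refine Finset.sum_congr rfl fun s _ => ?_
          rw [map_mul]; ring
  rw [Pi.add_apply, hL, hR1, hR2, ← Finset.sum_add_distrib]
  refine Finset.sum_congr rfl fun i _ => ?_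
  rw [← Finset.sum_add_distrib]
  refine Finset.sum_congr rfl fun j _ => ?_
  rw [key k hk i j t, map_add]
  ring
end

section
/- Let W be the Witt algebra over an algebraically closed field of characteristic p ≥ 5. Then the only W-invariant bilinear product on the (p-1)-dimensional restricted irreducible module L(p-1)/⟨m_0⟩ is the zero product. -/
/-- The action of the Witt algebra basis element `e_k` on the `(p-1)`-dimensional quotient
`L(p-1)/⟨m_0⟩`, with basis the classes `m̄_1, ..., m̄_{p-1}` (here the basis vector of index
`i : Fin (p-1)` represents `m̄_{i+1}`):  `e_k(m̄_j) = j · m̄_{k+j}` (zero out of range). -/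
def Ebarop (F : Type*) [Field F] (p : ℕ) (k : ℤ) (u : Fin (p - 1) → F) : Fin (p - 1) → F :=
  fun t =>
    ∑ i : Fin (p - 1),
      if (i : ℤ) + k = (t : ℤ) then (((i : ℤ) + 1 : ℤ) : F) * u i else 0

lemma collapse_some {n : ℕ} {F : Type*} [Field F] (f : Fin n → F) (c : ℤ) (r0 : Fin n)
    (h : (r0 : ℤ) = c) : (∑ r : Fin n, if (r : ℤ) = c then f r else 0) = f r0 := by
  rw [Finset.sum_eq_single r0]
  · simp [h]
  · intro b _ hb
    rw [if_neg]
    intro hbc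
    exact hb (Fin.ext (by omega))
  · simp

lemma collapse_none {n : ℕ} {F : Type*} [Field F] (f : Fin n → F) (c : ℤ)
    (h : ∀ r : Fin n, (r : ℤ) ≠ c) : (∑ r : Fin n, if (r : ℤ) = c then f r else 0) = 0 :=
  Finset.sum_eq_zero fun r _ => if_neg (h r)

lemma ebar_single (F : Type*) [Field F] (p : ℕ) (k : ℤ) (i : Fin (p - 1)) :
    Ebarop F p k (Pi.single i (1 : F)) =
      fun t : Fin (p - 1) => if (i : ℤ) + k = (t : ℤ) then ((i : ℤ) + 1 : F) else 0 := by
  funext t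
  unfold Ebarop
  rw [Finset.sum_eq_single i]
  · simp
  · intro r _ hr; simp [Pi.single_apply, hr]
  · simp

/-- The only `W`-invariant bilinear product on the restricted irreducible module
`L(p-1)/⟨m_0⟩` for the Witt algebra over an algebraically closed field of characteristic
`p ≥ 5` is the zero product. -/
theorem stmt8 (p : ℕ) (hp : p.Prime) (hp5 : 5 ≤ p)
    (F : Type*) [Field F] [IsAlgClosed F] [CharP F p]
    (mul : (Fin (p - 1) → F) →ₗ[F] (Fin (p - 1) → F) →ₗ[F] (Fin (p - 1) → F))
    (hinv : ∀ k : ℤ, -1 ≤ k → k ≤ (p : ℤ) - 2 → ∀ u v : Fin (p - 1) → F,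
      Ebarop F p k (mul u v) = mul (Ebarop F p k u) v + mul u (Ebarop F p k v)) :
    mul = 0 := by
  set C : Fin (p-1) → Fin (p-1) → Fin (p-1) → F :=
    fun i j t => mul (Pi.single i 1) (Pi.single j 1) t with hC
  have expandL : ∀ (u v : Fin (p-1) → F), mul u v = ∑ r, u r • mul (Pi.single r 1) v := by
    intro u v
    conv_lhs => rw [← Finset.univ_sum_single u]
    rw [map_sum, LinearMap.sum_apply]
    refine Finset.sum_congr rfl fun r _ => ?_
    have h1 : Pi.single r (u r) = u r • (Pi.single r (1:F) : Fin (p-1) → F) := by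
      rw [← Pi.single_smul]; simp
    rw [h1, map_smul, LinearMap.smul_apply]
  have expandR : ∀ (u v : Fin (p-1) → F), mul u v = ∑ r, v r • mul u (Pi.single r 1) := by
    intro u v
    conv_lhs => rw [← Finset.univ_sum_single v]
    rw [map_sum]
    refine Finset.sum_congr rfl fun r _ => ?_
    have h1 : Pi.single r (v r) = v r • (Pi.single r (1:F) : Fin (p-1) → F) := by
      rw [← Pi.single_smul]; simp
    rw [h1, map_smul]
  -- master relation
  have rel : ∀ k : ℤ, -1 ≤ k → k ≤ (p:ℤ) - 2 → ∀ i j s : Fin (p-1),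
      (∑ r : Fin (p-1), if (r:ℤ) = (s:ℤ) - k then ((r:ℤ) + 1 : F) * C i j r else 0)
      = (∑ r : Fin (p-1), if (r:ℤ) = (i:ℤ) + k then ((i:ℤ) + 1 : F) * C r j s else 0)
      + (∑ r : Fin (p-1), if (r:ℤ) = (j:ℤ) + k then ((j:ℤ) + 1 : F) * C i r s else 0) := by
    intro k hk1 hk2 i j s
    have h := congrFun (hinv k hk1 hk2 (Pi.single i 1) (Pi.single j 1)) s
    have hL : Ebarop F p k (mul (Pi.single i 1) (Pi.single j 1)) s
        = ∑ r : Fin (p-1), if (r:ℤ) = (s:ℤ) - k then ((r:ℤ) + 1 : F) * C i j r else 0 := by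
      unfold Ebarop
      refine Finset.sum_congr rfl fun r _ => ?_
      refine if_congr (by omega) (by push_cast; rfl) rfl
    have hR1 : mul (Ebarop F p k (Pi.single i 1)) (Pi.single j 1) s
        = ∑ r : Fin (p-1), if (r:ℤ) = (i:ℤ) + k then ((i:ℤ) + 1 : F) * C r j s else 0 := by
      rw [ebar_single, expandL, Finset.sum_apply]
      refine Finset.sum_congr rfl fun r _ => ?_
      by_cases hc : (r:ℤ) = (i:ℤ) + k
      · rw [if_pos (by omega : (i:ℤ) + k = (r:ℤ)), if_pos hc]
        simp [hC]
      · rw [if_neg (fun hh => hc (by omega)), if_neg hc]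
        simp
    have hR2 : mul (Pi.single i 1) (Ebarop F p k (Pi.single j 1)) s
        = ∑ r : Fin (p-1), if (r:ℤ) = (j:ℤ) + k then ((j:ℤ) + 1 : F) * C i r s else 0 := by
      rw [ebar_single, expandR, Finset.sum_apply]
      refine Finset.sum_congr rfl fun r _ => ?_
      by_cases hc : (r:ℤ) = (j:ℤ) + k
      · rw [if_pos (by omega : (j:ℤ) + k = (r:ℤ)), if_pos hc]
        simp [hC]
      · rw [if_neg (fun hh => hc (by omega)), if_neg hc]
        simp
    rw [hL] at h
    rw [Pi.add_apply, hR1, hR2] at h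
    exact h
  have hp0 : (0:ℤ) < (p:ℤ) := by exact_mod_cast hp.pos
  have pnotdvd : ∀ m : ℤ, -(p:ℤ) < m → m < 2*(p:ℤ) → m ≠ 0 → m ≠ (p:ℤ) → ¬ ((p:ℤ) ∣ m) := by
    intro m h1 h2 h3 h4 hd
    rcases hd with ⟨c, rfl⟩
    have hc1 : -1 < c := by nlinarith
    have hc2 : c < 2 := by nlinarith
    interval_cases c <;> omega
  have castne : ∀ m : ℤ, ¬ ((p:ℤ) ∣ m) → ((m : ℤ) : F) ≠ 0 := by
    intro m hm h0
    exact hm ((CharP.intCast_eq_zero_iff F p m).1 h0)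
  -- weight lemma
  have weight : ∀ i j t : Fin (p-1), ¬ ((p:ℤ) ∣ ((i:ℤ) + (j:ℤ) + 1 - (t:ℤ))) → C i j t = 0 := by
    intro i j t hdvd
    have h := rel 0 (by omega) (by omega) i j t
    rw [collapse_some _ _ t (by omega), collapse_some _ _ i (by omega),
        collapse_some _ _ j (by omega)] at h
    have h2 : ((((i:ℤ) + (j:ℤ) + 1 - (t:ℤ)) : ℤ) : F) * C i j t = 0 := by
      push_cast
      push_cast at h
      linear_combination -h
    rcases mul_eq_zero.1 h2 with h3 | h3
    · exact absurd h3 (castne _ hdvd)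
    · exact h3
  -- upper case: t = i+j+1-p
  have upper : ∀ i j t : Fin (p-1), (t:ℤ) = (i:ℤ) + (j:ℤ) + 1 - p → C i j t = 0 := by
    intro i j t ht
    have hi := i.isLt
    have hj := j.isLt
    have htn := t.isLt
    set k : ℤ := (p:ℤ) - 1 - min (i:ℤ) (j:ℤ) with hk
    have hmin : 1 ≤ min (i:ℤ) (j:ℤ) := by omega
    obtain ⟨s, hs⟩ : ∃ s : Fin (p-1), (s:ℤ) = max (i:ℤ) (j:ℤ) := by
      refine ⟨⟨max (i:ℕ) (j:ℕ), by omega⟩, ?_⟩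
      simp only [Fin.val_mk]
      omega
    have h := rel k (by omega) (by omega) i j s
    rw [hs] at h
    rw [collapse_some _ _ t (by omega),
        collapse_none _ _ (fun r => by have := r.isLt; omega),
        collapse_none _ _ (fun r => by have := r.isLt; omega)] at h
    have h2 : ((((t:ℤ) + 1) : ℤ) : F) * C i j t = 0 := by
      push_cast
      push_cast at h
      linear_combination h
    rcases mul_eq_zero.1 h2 with h3 | h3
    · exact absurd h3 (castne _ (pnotdvd _ (by omega) (by omega) (by omega) (by omega)))
    · exact h3
  -- lower case by induction: t = i+j+1
  have lower : ∀ m : ℕ, ∀ i j t : Fin (p-1), (i:ℕ) + (j:ℕ) = m →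
      (t:ℕ) = (i:ℕ) + (j:ℕ) + 1 → C i j t = 0 := by
    intro m
    induction m using Nat.strong_induction_on with
    | _ m IH =>
      intro i j t hm ht
      have hi := i.isLt
      have hj := j.isLt
      have htn := t.isLt
      obtain ⟨s, hs⟩ : ∃ s : Fin (p-1), (s:ℤ) = (t:ℤ) - 1 := by
        refine ⟨⟨(t:ℕ) - 1, by omega⟩, ?_⟩
        simp only [Fin.val_mk]
        omega
      have h := rel (-1) (by omega) (by omega) i j s
      rw [collapse_some _ _ t (by omega)] at h
      have hterm1 : (∑ r : Fin (p-1), if (r:ℤ) = (i:ℤ) + (-1) then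
          ((i:ℤ) + 1 : F) * C r j s else 0) = 0 := by
        by_cases hi0 : (i:ℕ) = 0
        · exact collapse_none _ _ (fun r => by have := r.isLt; omega)
        · obtain ⟨r1, hr1⟩ : ∃ r1 : Fin (p-1), (r1:ℤ) = (i:ℤ) - 1 := by
            refine ⟨⟨(i:ℕ) - 1, by omega⟩, ?_⟩
            simp only [Fin.val_mk]; omega
          rw [collapse_some _ _ r1 (by omega)]
          have : C r1 j s = 0 := IH (m-1) (by omega) r1 j s (by omega) (by omega)
          rw [this, mul_zero]
      have hterm2 : (∑ r : Fin (p-1), if (r:ℤ) = (j:ℤ) + (-1) then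
          ((j:ℤ) + 1 : F) * C i r s else 0) = 0 := by
        by_cases hj0 : (j:ℕ) = 0
        · exact collapse_none _ _ (fun r => by have := r.isLt; omega)
        · obtain ⟨r1, hr1⟩ : ∃ r1 : Fin (p-1), (r1:ℤ) = (j:ℤ) - 1 := by
            refine ⟨⟨(j:ℕ) - 1, by omega⟩, ?_⟩
            simp only [Fin.val_mk]; omega
          rw [collapse_some _ _ r1 (by omega)]
          have : C i r1 s = 0 := IH (m-1) (by omega) i r1 s (by omega) (by omega)
          rw [this, mul_zero]
      rw [hterm1, hterm2, add_zero] at h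
      have h2 : ((((t:ℤ) + 1) : ℤ) : F) * C i j t = 0 := by
        push_cast
        push_cast at h
        linear_combination h
      rcases mul_eq_zero.1 h2 with h3 | h3
      · exact absurd h3 (castne _ (pnotdvd _ (by omega) (by omega) (by omega) (by omega)))
      · exact h3
  have allzero : ∀ i j t : Fin (p-1), C i j t = 0 := by
    intro i j t
    have hi := i.isLt
    have hj := j.isLt
    have htn := t.isLt
    by_cases h1 : (t:ℕ) = (i:ℕ) + (j:ℕ) + 1
    · exact lower _ i j t rfl h1
    · by_cases h2 : (t:ℤ) = (i:ℤ) + (j:ℤ) + 1 - p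
      · exact upper i j t h2
      · exact weight i j t (pnotdvd _ (by omega) (by omega) (by omega) (by omega))
  apply Module.Basis.ext (Pi.basisFun F (Fin (p-1)))
  intro i
  apply Module.Basis.ext (Pi.basisFun F (Fin (p-1)))
  intro j
  rw [Pi.basisFun_apply, Pi.basisFun_apply]
  funext t
  simpa using allzero i j t
end

section
/- Let W be the Witt algebra over an algebraically closed field of characteristic p ≥ 5, and let λ ∈ {1,...,p-3}. If the Verma module L(λ) admits a nonzero W-invariant bilinear product, then p = 7 and λ = 3. -/
set_option maxHeartbeats 1000000

/-- The action of the Witt algebra basis element `e_k` on the Verma module `L(l)` with basis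
`m_0, ..., m_{p-1}`:  `e_k(m_j) = (j + (l+1)(k+1)) m_{k+j}`, with `m_j = 0` for `j` outside
`{0, ..., p-1}`. -/
def Eop (F : Type*) [Field F] (p l : ℕ) (k : ℤ) (u : Fin p → F) : Fin p → F := fun t =>
  ∑ j : Fin p,
    if (j : ℤ) + k = (t : ℤ) then (((j : ℤ) + ((l : ℤ) + 1) * (k + 1) : ℤ) : F) * u j
    else 0

namespace S9
variable {F : Type*} [Field F]

lemma Eop_apply (p l : ℕ) (k : ℤ) (u : Fin p → F) (t : Fin p) :
    Eop F p l k u t =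
      if h : 0 ≤ (t : ℤ) - k ∧ (t : ℤ) - k < p then
        ((((t : ℤ) - k) + ((l : ℤ) + 1) * (k + 1) : ℤ) : F) * u ⟨((t : ℤ) - k).toNat, by omega⟩
      else 0 := by
  unfold Eop
  by_cases h : 0 ≤ (t : ℤ) - k ∧ (t : ℤ) - k < p
  · rw [dif_pos h]
    set b0 : Fin p := ⟨((t : ℤ) - k).toNat, by omega⟩ with hb0def
    have hv : (b0 : ℤ) = (t : ℤ) - k := by
      simp [hb0def]; omega
    rw [Finset.sum_eq_single b0]
    · rw [if_pos (by omega), hv]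
    · intro b _ hb
      rw [if_neg]
      intro hc
      apply hb
      apply Fin.ext
      have h1 : b0.val = ((t : ℤ) - k).toNat := rfl
      have hbv : (b : ℤ) = (t : ℤ) - k := by omega
      omega
    · simp
  · rw [dif_neg h]
    apply Finset.sum_eq_zero
    intro b _
    rw [if_neg]
    intro hc
    have hb0 : (0:ℤ) ≤ (b:ℤ) := by positivity
    have hbp : ((b:ℤ)) < p := by exact_mod_cast b.isLt
    exact h ⟨by omega, by omega⟩

/-- indicator basis vector with integer index, zero outside `[0,p)` -/
def ee (p : ℕ) (i : ℤ) : Fin p → F := fun t => if i = (t : ℤ) then 1 else 0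

/-- projection onto integer component, zero outside `[0,p)` -/
def pp (p : ℕ) (t : ℤ) (w : Fin p → F) : F :=
  if h : 0 ≤ t ∧ t < p then w ⟨t.toNat, by omega⟩ else 0

lemma ee_out (p : ℕ) (i : ℤ) (h : ¬(0 ≤ i ∧ i < p)) : (ee p i : Fin p → F) = 0 := by
  funext t
  have ht0 : (0:ℤ) ≤ (t:ℤ) := by positivity
  have htp : ((t:ℤ)) < p := by exact_mod_cast t.isLt
  simp only [ee, Pi.zero_apply, ite_eq_right_iff]
  intro hc; exact absurd ⟨by omega, by omega⟩ h

lemma pp_zero (p : ℕ) (t : ℤ) : pp p t (0 : Fin p → F) = 0 := by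
  unfold pp; split_ifs <;> simp

lemma pp_add (p : ℕ) (t : ℤ) (w₁ w₂ : Fin p → F) :
    pp p t (w₁ + w₂) = pp p t w₁ + pp p t w₂ := by
  unfold pp; split_ifs <;> simp

lemma pp_smul (p : ℕ) (t : ℤ) (x : F) (w : Fin p → F) :
    pp p t (x • w) = x * pp p t w := by
  unfold pp; split_ifs <;> simp

/-- `pp` of `Eop` -/
lemma pp_Eop (p l : ℕ) (k t : ℤ) (w : Fin p → F) (ht : 0 ≤ t ∧ t < p) :
    pp p t (Eop F p l k w) = ((t - k + ((l:ℤ)+1)*(k+1) : ℤ) : F) * pp p (t-k) w := by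
  unfold pp
  rw [dif_pos ht, Eop_apply]
  have hval : (((⟨t.toNat, by omega⟩ : Fin p)) : ℤ) = t := by simp; omega
  by_cases h : 0 ≤ t - k ∧ t - k < p
  · rw [dif_pos (by rw [hval]; exact h), dif_pos h]
    congr 2 <;> simp [hval]
  · rw [dif_neg (by rw [hval]; exact h), dif_neg h, mul_zero]

lemma Eop_ee (p l : ℕ) (k i : ℤ) (hi : 0 ≤ i ∧ i < p) :
    Eop F p l k (ee p i) = ((i + ((l:ℤ) + 1) * (k + 1) : ℤ) : F) • ee p (i + k) := by
  funext t
  rw [Eop_apply]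
  have ht0 : (0:ℤ) ≤ (t:ℤ) := by positivity
  have htp : ((t:ℤ)) < p := by exact_mod_cast t.isLt
  by_cases h : 0 ≤ (t : ℤ) - k ∧ (t : ℤ) - k < p
  · rw [dif_pos h]
    have hv : (((⟨((t : ℤ) - k).toNat, by omega⟩ : Fin p)) : ℤ) = (t:ℤ) - k := by
      simp; omega
    simp only [ee, Pi.smul_apply, smul_eq_mul, hv]
    by_cases hit : i = (t:ℤ) - k
    · rw [if_pos hit, if_pos (by omega), mul_one, mul_one, hit]
    · rw [if_neg hit, if_neg (by omega), mul_zero, mul_zero]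
  · rw [dif_neg h]
    simp only [ee, Pi.smul_apply, smul_eq_mul]
    rw [if_neg (by omega), mul_zero]

section withMul
variable (p l : ℕ) (mul : (Fin p → F) →ₗ[F] (Fin p → F) →ₗ[F] (Fin p → F))

/-- coefficient of `mul (e i) (e j)` on component `t`, integer indices -/
def CC (i j t : ℤ) : F := pp p t (mul (ee p i) (ee p j))

/-- the weight-relevant coefficient -/
def cc (i j : ℤ) : F := CC p mul i j ((i + j + (l:ℤ) + 1) % p)

lemma CC_left_out (i j t : ℤ) (h : ¬(0 ≤ i ∧ i < p)) : CC p mul i j t = 0 := by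
  unfold CC; rw [ee_out p i h]; simp [pp_zero]

lemma CC_right_out (i j t : ℤ) (h : ¬(0 ≤ j ∧ j < p)) : CC p mul i j t = 0 := by
  unfold CC; rw [ee_out p j h]; simp [pp_zero]

lemma cc_left_out (i j : ℤ) (h : ¬(0 ≤ i ∧ i < p)) : cc p l mul i j = 0 :=
  CC_left_out p mul i j _ h

lemma cc_right_out (i j : ℤ) (h : ¬(0 ≤ j ∧ j < p)) : cc p l mul i j = 0 :=
  CC_right_out p mul i j _ h

lemma master
    (hinv : ∀ k : ℤ, -1 ≤ k → k ≤ (p : ℤ) - 2 → ∀ u v : Fin p → F,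
      Eop F p l k (mul u v) = mul (Eop F p l k u) v + mul u (Eop F p l k v))
    (k : ℤ) (hk1 : -1 ≤ k) (hk2 : k ≤ (p:ℤ) - 2) (i j t : ℤ)
    (hi : 0 ≤ i ∧ i < p) (hj : 0 ≤ j ∧ j < p) (ht : 0 ≤ t ∧ t < p) :
    ((t - k + ((l:ℤ)+1)*(k+1) : ℤ) : F) * CC p mul i j (t-k)
      = ((i + ((l:ℤ)+1)*(k+1) : ℤ) : F) * CC p mul (i+k) j t
      + ((j + ((l:ℤ)+1)*(k+1) : ℤ) : F) * CC p mul i (j+k) t := by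
  have H := hinv k hk1 hk2 (ee p i) (ee p j)
  have Ht := congrArg (pp p t) H
  rw [pp_Eop p l k t _ ht, Eop_ee p l k i hi, Eop_ee p l k j hj] at Ht
  rw [map_smul, LinearMap.smul_apply, map_smul, pp_add, pp_smul, pp_smul] at Ht
  exact Ht

lemma keyE (hp : 0 < p)
    (hinv : ∀ k : ℤ, -1 ≤ k → k ≤ (p : ℤ) - 2 → ∀ u v : Fin p → F,
      Eop F p l k (mul u v) = mul (Eop F p l k u) v + mul u (Eop F p l k v))
    (k i j : ℤ) (hk1 : -1 ≤ k) (hk2 : k ≤ (p:ℤ) - 2)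
    (hi : 0 ≤ i ∧ i < p) (hj : 0 ≤ j ∧ j < p) :
    (if 0 ≤ (i + j + (l:ℤ) + 1) % p + k ∧ (i + j + (l:ℤ) + 1) % p + k < p then
        (((i + j + (l:ℤ) + 1) % p + ((l:ℤ)+1)*(k+1) : ℤ) : F) else 0) * cc p l mul i j
      = ((i + ((l:ℤ)+1)*(k+1) : ℤ) : F) * cc p l mul (i+k) j
      + ((j + ((l:ℤ)+1)*(k+1) : ℤ) : F) * cc p l mul i (j+k) := by
  have hp' : (0:ℤ) < p := by exact_mod_cast hp
  set τ : ℤ := (i + j + (l:ℤ) + 1) % p with hτdef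
  have hτ : 0 ≤ τ ∧ τ < p := ⟨Int.emod_nonneg _ (by omega), Int.emod_lt_of_pos _ hp'⟩
  set t : ℤ := (τ + k) % p with htdef
  have ht : 0 ≤ t ∧ t < p := ⟨Int.emod_nonneg _ (by omega), Int.emod_lt_of_pos _ hp'⟩
  have hd : (p:ℤ) ∣ (τ + k - t) := Int.dvd_self_sub_of_emod_eq rfl
  have h1 : t = ((i+k) + j + (l:ℤ) + 1) % p := by
    rw [htdef, hτdef, Int.emod_add_emod]; congr 1; ring
  have h2 : t = (i + (j+k) + (l:ℤ) + 1) % p := by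
    rw [htdef, hτdef, Int.emod_add_emod]; congr 1; ring
  have M := master p l mul hinv k hk1 hk2 i j t hi hj ht
  have hr1 : CC p mul (i+k) j t = cc p l mul (i+k) j := by
    unfold cc; rw [← h1]
  have hr2 : CC p mul i (j+k) t = cc p l mul i (j+k) := by
    unfold cc; rw [← h2]
  rw [hr1, hr2] at M
  by_cases hbox : 0 ≤ τ + k ∧ τ + k < p
  · have ht2 : t = τ + k := by rw [htdef]; exact Int.emod_eq_of_lt hbox.1 hbox.2
    have htk : t - k = τ := by omega
    rw [if_pos hbox]
    rw [htk] at M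
    have hcc : CC p mul i j τ = cc p l mul i j := by unfold cc; rw [← hτdef]
    rw [hcc] at M
    exact M
  · rw [if_neg hbox, zero_mul]
    have hout : ¬(0 ≤ t - k ∧ t - k < p) := by
      intro hc
      have hdvd : (p:ℤ) ∣ (t - k - τ) := by
        have h' : (p:ℤ) ∣ -(τ + k - t) := dvd_neg.mpr hd
        have he : -(τ + k - t) = t - k - τ := by ring
        rwa [he] at h'
      have h0 : t - k - τ = 0 :=
        Int.eq_zero_of_abs_lt_dvd hdvd (abs_lt.mpr ⟨by omega, by omega⟩)
      exact hbox ⟨by omega, by omega⟩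
    have hC0 : CC p mul i j (t-k) = 0 := by
      unfold CC pp; rw [dif_neg hout]
    rw [hC0, mul_zero] at M
    exact M

lemma weight [CharP F p] (hp : 2 ≤ p)
    (hinv : ∀ k : ℤ, -1 ≤ k → k ≤ (p : ℤ) - 2 → ∀ u v : Fin p → F,
      Eop F p l k (mul u v) = mul (Eop F p l k u) v + mul u (Eop F p l k v))
    (i j t : ℤ) (hi : 0 ≤ i ∧ i < p) (hj : 0 ≤ j ∧ j < p) (ht : 0 ≤ t ∧ t < p)
    (hmod : ¬ ((p:ℤ) ∣ (t - (i + j + (l:ℤ) + 1)))) : CC p mul i j t = 0 := by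
  have M := master p l mul hinv 0 (by norm_num) (by omega) i j t hi hj ht
  simp only [add_zero, sub_zero] at M
  have key : ((t - (i + j + (l:ℤ) + 1) : ℤ) : F) * CC p mul i j t = 0 := by
    push_cast at M ⊢
    ring_nf at M ⊢
    linear_combination M
  rcases mul_eq_zero.mp key with h | h
  · exact absurd ((CharP.intCast_eq_zero_iff F p _).mp h) hmod
  · exact h

lemma hbasis (p : ℕ) (x : Fin p → F) : x = ∑ i : Fin p, x i • ee p (i : ℤ) := by
  funext s
  rw [Finset.sum_apply]
  have hcond : ∀ i : Fin p, (((i:ℤ) = (s:ℤ))) ↔ ((i = s)) := by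
    intro i
    constructor
    · intro h; exact Fin.ext (by exact_mod_cast h)
    · intro h; rw [h]
  simp only [Pi.smul_apply, ee, smul_eq_mul, hcond, mul_ite, mul_one, mul_zero]
  simp [Finset.sum_ite_eq']

lemma mul_eq_zero_of [CharP F p] (hp : 2 ≤ p)
    (hinv : ∀ k : ℤ, -1 ≤ k → k ≤ (p : ℤ) - 2 → ∀ u v : Fin p → F,
      Eop F p l k (mul u v) = mul (Eop F p l k u) v + mul u (Eop F p l k v))
    (hall : ∀ i j : ℤ, 0 ≤ i → i < p → 0 ≤ j → j < p → cc p l mul i j = 0) :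
    mul = 0 := by
  have hp' : (0:ℤ) < p := by exact_mod_cast (by omega : 0 < p)
  have hz : ∀ i j : Fin p, mul (ee p (i:ℤ)) (ee p (j:ℤ)) = 0 := by
    intro i j
    funext t
    have hi : (0:ℤ) ≤ (i:ℤ) ∧ ((i:ℤ)) < p := ⟨by positivity, by exact_mod_cast i.isLt⟩
    have hj : (0:ℤ) ≤ (j:ℤ) ∧ ((j:ℤ)) < p := ⟨by positivity, by exact_mod_cast j.isLt⟩
    have ht : (0:ℤ) ≤ (t:ℤ) ∧ ((t:ℤ)) < p := ⟨by positivity, by exact_mod_cast t.isLt⟩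
    have hCCval : CC p mul (i:ℤ) (j:ℤ) (t:ℤ) = mul (ee p (i:ℤ)) (ee p (j:ℤ)) t := by
      unfold CC pp
      rw [dif_pos ht]
      congr 1
    rw [Pi.zero_apply, ← hCCval]
    by_cases hmod : (p:ℤ) ∣ ((t:ℤ) - ((i:ℤ) + (j:ℤ) + (l:ℤ) + 1))
    · have he : ((t:ℤ)) = ((i:ℤ) + (j:ℤ) + (l:ℤ) + 1) % p := by
        have h1 : ((i:ℤ) + (j:ℤ) + (l:ℤ) + 1) % p = ((t:ℤ)) % p :=
          Int.modEq_iff_dvd.mpr hmod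
        rw [h1, Int.emod_eq_of_lt ht.1 ht.2]
      rw [he]
      exact hall _ _ hi.1 hi.2 hj.1 hj.2
    · exact weight p l mul hp hinv _ _ _ hi hj ht hmod
  apply LinearMap.ext; intro u; apply LinearMap.ext; intro v
  rw [LinearMap.zero_apply, LinearMap.zero_apply]
  conv_lhs => rw [hbasis p u, hbasis p v]
  simp only [map_sum, map_smul, LinearMap.sum_apply, LinearMap.smul_apply,
    LinearMap.map_smul₂, hz, smul_zero, Finset.sum_const_zero]

lemma emod_eq3 (p : ℕ) (hp : 0 < p) (x r : ℤ) (h0 : 0 ≤ r) (h1 : r < p)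
    (h : x = r ∨ x = r + p ∨ x = r + 2*p) : x % (p:ℤ) = r := by
  rcases h with rfl | rfl | rfl
  · exact Int.emod_eq_of_lt h0 h1
  · rw [show r + (p:ℤ) = r + (p:ℤ)*1 by ring, Int.add_mul_emod_self_left]
    exact Int.emod_eq_of_lt h0 h1
  · rw [show r + 2*(p:ℤ) = r + (p:ℤ)*2 by ring, Int.add_mul_emod_self_left]
    exact Int.emod_eq_of_lt h0 h1

lemma not_dvd_small (p : ℕ) {n : ℤ} (h1 : 0 < n) (h2 : n < p) : ¬ ((p:ℤ) ∣ n) := by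
  intro hd
  have := Int.le_of_dvd h1 hd
  omega

lemma cast_ne [CharP F p] {n : ℤ} (h : ¬ ((p:ℤ) ∣ n)) : ((n : ℤ) : F) ≠ 0 := by
  intro h0
  exact h ((CharP.intCast_eq_zero_iff F p n).mp h0)

lemma cast_ne' (p : ℕ) [CharP F p] {n : ℤ} (h1 : 0 < n) (h2 : n < p) : ((n : ℤ) : F) ≠ 0 :=
  cast_ne p (not_dvd_small p h1 h2)

section phases
variable [CharP F p]
variable (hpp : Nat.Prime p) (hp5 : 5 ≤ p) (hl1 : 1 ≤ l) (hl3 : l + 3 ≤ p)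
variable (hinv : ∀ k : ℤ, -1 ≤ k → k ≤ (p : ℤ) - 2 → ∀ u v : Fin p → F,
      Eop F p l k (mul u v) = mul (Eop F p l k u) v + mul u (Eop F p l k v))

include hpp hp5 hl1 hl3 hinv

/-- Phase E0 : the low branch vanishes. -/
lemma low_zero : ∀ n : ℕ, ∀ i j : ℤ, 0 ≤ i → i < p → 0 ≤ j → j < p →
    i + j = n → i + j + (l:ℤ) + 1 ≤ (p:ℤ) - 1 → cc p l mul i j = 0 := by
  intro n
  induction n using Nat.strong_induction_on with
  | _ n IH =>
    intro i j hi0 hi1 hj0 hj1 hn hlow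
    have hτ : (i + j + (l:ℤ) + 1) % (p:ℤ) = i + j + (l:ℤ) + 1 :=
      emod_eq3 p (by omega) _ _ (by omega) (by omega) (Or.inl rfl)
    have E := keyE p l mul (by omega) hinv (-1) i j (by norm_num) (by omega)
      ⟨hi0, hi1⟩ ⟨hj0, hj1⟩
    rw [hτ, if_pos (⟨by omega, by omega⟩ : (0:ℤ) ≤ i + j + (l:ℤ) + 1 + -1 ∧
      i + j + (l:ℤ) + 1 + -1 < (p:ℤ))] at E
    have h1 : cc p l mul (i + -1) j = 0 := by
      by_cases hi : i = 0
      · exact cc_left_out p l mul _ _ (by omega)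
      · exact IH (i + -1 + j).toNat (by omega) (i + -1) j (by omega) (by omega) hj0 hj1
          (by omega) (by omega)
    have h2 : cc p l mul i (j + -1) = 0 := by
      by_cases hj : j = 0
      · exact cc_right_out p l mul _ _ (by omega)
      · exact IH (i + (j + -1)).toNat (by omega) i (j + -1) hi0 hi1 (by omega) (by omega)
          (by omega) (by omega)
    rw [h1, h2, mul_zero, mul_zero, add_zero] at E
    rw [show i + j + (l:ℤ) + 1 + ((l:ℤ)+1)*(-1+1) = i + j + (l:ℤ) + 1 by ring] at E
    rcases mul_eq_zero.mp E with h | h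
    · exact absurd h (cast_ne' p (by omega) (by omega))
    · exact h

/-- Edge relation on the row `i = p-1`. -/
lemma edge_rel (k j : ℤ) (hk1 : 1 ≤ k) (hk2 : k ≤ 2) (hj0 : 0 ≤ j)
    (hjk : j + k + (l:ℤ) + 1 ≤ (p:ℤ)) :
    ((j + (l:ℤ) + ((l:ℤ)+1)*(k+1) : ℤ) : F) * cc p l mul ((p:ℤ)-1) j
      = ((j + ((l:ℤ)+1)*(k+1) : ℤ) : F) * cc p l mul ((p:ℤ)-1) (j+k) := by
  have hτ : ((p:ℤ)-1 + j + (l:ℤ) + 1) % (p:ℤ) = j + (l:ℤ) :=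
    emod_eq3 p (by omega) _ _ (by omega) (by omega) (Or.inr (Or.inl (by ring)))
  have E := keyE p l mul (by omega) hinv k ((p:ℤ)-1) j (by omega) (by omega)
    ⟨by omega, by omega⟩ ⟨by omega, by omega⟩
  rw [hτ, if_pos (⟨by omega, by omega⟩ : (0:ℤ) ≤ j + (l:ℤ) + k ∧ j + (l:ℤ) + k < (p:ℤ))] at E
  have h1 : cc p l mul ((p:ℤ)-1+k) j = 0 := cc_left_out p l mul _ _ (by omega)
  rw [h1, mul_zero, zero_add] at E
  rw [show j + (l:ℤ) + ((l:ℤ)+1)*(k+1) = j + (l:ℤ) + ((l:ℤ)+1)*(k+1) from rfl] at E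
  exact E

/-- Propagation along the top row from `a₀ = 0`. -/
lemma edge_zero (ha0 : cc p l mul ((p:ℤ)-1) 0 = 0) :
    ∀ n : ℕ, (n:ℤ) + (l:ℤ) + 1 ≤ (p:ℤ) → cc p l mul ((p:ℤ)-1) (n:ℤ) = 0 := by
  intro n
  induction n using Nat.strong_induction_on with
  | _ n IH =>
    intro hn
    by_cases hn0 : n = 0
    · subst hn0; simpa using ha0
    · by_cases hbrk : (p:ℤ) ∣ ((n:ℤ) + 2*(l:ℤ) + 1)
      · have hn2 : 2 ≤ n := by
          by_contra h
          have hn1 : n = 1 := by omega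
          subst hn1
          have h2 : (p:ℤ) ∣ 2*((l:ℤ)+1) := by
            convert hbrk using 1; push_cast; ring
          rcases (Int.Prime.dvd_mul' hpp h2) with h | h
          · have := Int.le_of_dvd (by norm_num) h; omega
          · exact not_dvd_small p (by omega) (by omega) h
        have r := edge_rel p l mul hpp hp5 hl1 hl3 hinv 2 ((n:ℤ)-2) (by norm_num)
          (by norm_num) (by omega) (by omega)
        rw [show (n:ℤ)-2+2 = (n:ℤ) by ring] at r
        have hprev : cc p l mul ((p:ℤ)-1) ((n:ℤ)-2) = 0 := by
          have h := IH (n-2) (by omega) (by push_cast; omega)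
          rw [show ((n:ℤ)-2) = ((n-2:ℕ):ℤ) by push_cast; omega]
          exact h
        rw [hprev, mul_zero] at r
        have hco : (((n:ℤ)-2 + ((l:ℤ)+1)*(2+1) : ℤ) : F) = (((l:ℤ) : ℤ) : F) := by
          have h1 : (((n:ℤ)+2*(l:ℤ)+1 : ℤ) : F) = 0 :=
            (CharP.intCast_eq_zero_iff F p _).mpr hbrk
          push_cast at h1 ⊢
          linear_combination h1
        rw [hco] at r
        rcases mul_eq_zero.mp r.symm with h | h
        · exact absurd h (cast_ne' p (by omega) (by omega))
        · exact h
      · have r := edge_rel p l mul hpp hp5 hl1 hl3 hinv 1 ((n:ℤ)-1) (by norm_num)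
          (by norm_num) (by omega) (by omega)
        rw [show (n:ℤ)-1+1 = (n:ℤ) by ring] at r
        have hprev : cc p l mul ((p:ℤ)-1) ((n:ℤ)-1) = 0 := by
          have h := IH (n-1) (by omega) (by push_cast; omega)
          rw [show ((n:ℤ)-1) = ((n-1:ℕ):ℤ) by push_cast; omega]
          exact h
        rw [hprev, mul_zero] at r
        rw [show (n:ℤ)-1 + ((l:ℤ)+1)*(1+1) = (n:ℤ) + 2*(l:ℤ) + 1 by ring] at r
        rcases mul_eq_zero.mp r.symm with h | h
        · exact absurd h (cast_ne p hbrk)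
        · exact h

/-- Main analysis of the top-row edge: nonzero corner forces `p = 7 ∧ l = 3`. -/
lemma edge_case (ha0 : cc p l mul ((p:ℤ)-1) 0 ≠ 0) : p = 7 ∧ l = 3 := by
  have r1 := edge_rel p l mul hpp hp5 hl1 hl3 hinv 1 0 (by norm_num) (by norm_num)
    le_rfl (by omega)
  have r2 := edge_rel p l mul hpp hp5 hl1 hl3 hinv 2 0 (by norm_num) (by norm_num)
    le_rfl (by omega)
  have r3 := edge_rel p l mul hpp hp5 hl1 hl3 hinv 1 1 (by norm_num) (by norm_num)
    (by norm_num) (by omega)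
  rw [show (0:ℤ)+1 = 1 by norm_num] at r1
  rw [show (0:ℤ)+2 = 2 by norm_num] at r2
  rw [show (1:ℤ)+1 = 2 by norm_num] at r3
  set a0 := cc p l mul ((p:ℤ)-1) 0 with ha0d
  set a1 := cc p l mul ((p:ℤ)-1) 1 with ha1d
  set a2 := cc p l mul ((p:ℤ)-1) 2 with ha2d
  set a3 := cc p l mul ((p:ℤ)-1) 3 with ha3d
  have pr1 : (3*(l:F)+2) * a0 = (2*(l:F)+2) * a1 := by
    push_cast at r1 ⊢; linear_combination r1
  have pr2 : (4*(l:F)+3) * a0 = (3*(l:F)+3) * a2 := by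
    push_cast at r2 ⊢; linear_combination r2
  have pr3 : (3*(l:F)+3) * a1 = (2*(l:F)+3) * a2 := by
    push_cast at r3 ⊢; linear_combination r3
  have key0 : ((l:F)*((l:F)+1)*(11*(l:F)+9)) * a0 = 0 := by
    linear_combination ((3*(l:F)+3)^2)*pr1 + ((2*(l:F)+2)*(3*(l:F)+3))*pr3
      - ((2*(l:F)+2)*(2*(l:F)+3))*pr2
  have h0 := (mul_eq_zero.mp key0).resolve_right ha0
  have hd9 : (p:ℤ) ∣ (11*(l:ℤ)+9) := by
    have hcast : (((l:ℤ)*((l:ℤ)+1)*(11*(l:ℤ)+9) : ℤ) : F) = 0 := by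
      push_cast
      linear_combination h0
    have hdvd := (CharP.intCast_eq_zero_iff F p _).mp hcast
    rcases (Int.Prime.dvd_mul' hpp hdvd) with h | h
    · rcases (Int.Prime.dvd_mul' hpp h) with h' | h'
      · exact absurd h' (not_dvd_small p (by omega) (by omega))
      · exact absurd h' (not_dvd_small p (by omega) (by omega))
    · exact h
  by_cases hl4 : (l:ℤ) + 4 ≤ (p:ℤ)
  · have r4 := edge_rel p l mul hpp hp5 hl1 hl3 hinv 2 1 (by norm_num) (by norm_num)
      (by norm_num) (by omega)
    have r5 := edge_rel p l mul hpp hp5 hl1 hl3 hinv 1 2 (by norm_num) (by norm_num)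
      (by norm_num) (by omega)
    rw [show (1:ℤ)+2 = 3 by norm_num] at r4
    rw [show (2:ℤ)+1 = 3 by norm_num] at r5
    have pr4 : (4*(l:F)+4) * a1 = (3*(l:F)+4) * a3 := by
      push_cast at r4 ⊢; linear_combination r4
    have pr5 : (3*(l:F)+4) * a2 = (2*(l:F)+4) * a3 := by
      push_cast at r5 ⊢; linear_combination r5
    by_cases ha1 : a1 = 0
    · -- forces p = 5, l = 1, then contradiction
      rw [ha1, mul_zero] at pr1
      have h32 := (mul_eq_zero.mp pr1).resolve_right ha0
      have hd32 : (p:ℤ) ∣ (3*(l:ℤ)+2) := by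
        have : (((3*(l:ℤ)+2 : ℤ)) : F) = 0 := by push_cast; linear_combination h32
        exact (CharP.intCast_eq_zero_iff F p _).mp this
      have hd5 : (p:ℤ) ∣ 5 := by
        have h5 : (5:ℤ) = 3*(11*(l:ℤ)+9) - 11*(3*(l:ℤ)+2) := by ring
        rw [h5]
        exact dvd_sub (hd9.mul_left 3) (hd32.mul_left 11)
      have hp5' : p = 5 := by
        have h5n : p ∣ 5 := by exact_mod_cast hd5
        exact (Nat.prime_dvd_prime_iff_eq hpp (by norm_num)).mp h5n
      have hl1' : l = 1 := by
        subst hp5'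
        have : (5:ℤ) ∣ 3*(l:ℤ)+2 := by exact_mod_cast hd32
        omega
      subst hp5'; subst hl1'
      -- now coefficients are concrete
      exfalso
      rw [ha1] at pr4
      have h7 : ((7:ℤ):F) ≠ 0 := cast_ne 5 (by omega)
      have h7' : (7:F) ≠ 0 := by exact_mod_cast h7
      have ha3z : a3 = 0 := by
        have h : (7:F) * a3 = 0 := by push_cast at pr4; linear_combination -pr4
        exact (mul_eq_zero.mp h).resolve_left h7'
      have ha2z : a2 = 0 := by
        rw [ha3z, mul_zero] at pr5
        have h : (7:F) * a2 = 0 := by push_cast at pr5; linear_combination pr5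
        exact (mul_eq_zero.mp h).resolve_left h7'
      apply ha0
      rw [ha2z, mul_zero] at pr2
      have h : (7:F) * a0 = 0 := by push_cast at pr2; linear_combination pr2
      exact (mul_eq_zero.mp h).resolve_left h7'
    · -- a1 ≠ 0 : p = 7, l = 3
      have key1 : ((l:F)*((l:F)+1)*(11*(l:F)+16)) * a1 = 0 := by
        linear_combination ((3*(l:F)+4)^2)*pr3 + ((2*(l:F)+3)*(3*(l:F)+4))*pr5
          - ((2*(l:F)+3)*(2*(l:F)+4))*pr4
      have h1 := (mul_eq_zero.mp key1).resolve_right ha1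
      have hd16 : (p:ℤ) ∣ (11*(l:ℤ)+16) := by
        have hcast : (((l:ℤ)*((l:ℤ)+1)*(11*(l:ℤ)+16) : ℤ) : F) = 0 := by
          push_cast
          linear_combination h1
        have hdvd := (CharP.intCast_eq_zero_iff F p _).mp hcast
        rcases (Int.Prime.dvd_mul' hpp hdvd) with h | h
        · rcases (Int.Prime.dvd_mul' hpp h) with h' | h'
          · exact absurd h' (not_dvd_small p (by omega) (by omega))
          · exact absurd h' (not_dvd_small p (by omega) (by omega))
        · exact h
      have hd7 : (p:ℤ) ∣ 7 := by
        have h7 : (7:ℤ) = (11*(l:ℤ)+16) - (11*(l:ℤ)+9) := by ring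
        rw [h7]
        exact dvd_sub hd16 hd9
      have hp7 : p = 7 := by
        have h7n : p ∣ 7 := by exact_mod_cast hd7
        exact (Nat.prime_dvd_prime_iff_eq hpp (by norm_num)).mp h7n
      refine ⟨hp7, ?_⟩
      subst hp7
      have : (7:ℤ) ∣ 11*(l:ℤ)+9 := by exact_mod_cast hd9
      omega
  · -- l = p - 3 : contradiction via p ∣ 24
    exfalso
    have hd24 : (p:ℤ) ∣ 24 := by
      have h24 : (24:ℤ) = 11*(p:ℤ) - (11*(l:ℤ)+9) := by omega
      rw [h24]
      exact dvd_sub (dvd_mul_left _ _) hd9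
    have h24n : p ∣ 24 := by exact_mod_cast hd24
    have h83 : p ∣ 8 * 3 := by rw [show 8*3 = 24 by norm_num]; exact h24n
    rcases (Nat.Prime.dvd_mul hpp).mp h83 with h | h
    · rw [show (8:ℕ) = 2^3 by norm_num] at h
      have h2 := hpp.dvd_of_dvd_pow h
      have := Nat.le_of_dvd (by norm_num) h2
      omega
    · have := Nat.le_of_dvd (by norm_num) h
      omega

/-- Two-step vanishing using k=1 and k=2 when `τ ≤ p-3`. -/
lemma two_step (i j τv : ℤ) (hi : 0 ≤ i ∧ i < p) (hj : 0 ≤ j ∧ j < p)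
    (hτ : (i + j + (l:ℤ) + 1) % (p:ℤ) = τv) (h0 : 0 ≤ τv) (h3 : τv ≤ (p:ℤ)-3)
    (R1 : cc p l mul (i+1) j = 0) (R2 : cc p l mul i (j+1) = 0)
    (R3 : cc p l mul (i+2) j = 0) (R4 : cc p l mul i (j+2) = 0) :
    cc p l mul i j = 0 := by
  have E1 := keyE p l mul (by omega) hinv 1 i j (by norm_num) (by omega) hi hj
  rw [hτ, if_pos (⟨by omega, by omega⟩ : (0:ℤ) ≤ τv + 1 ∧ τv + 1 < (p:ℤ))] at E1
  rw [R1, R2, mul_zero, mul_zero, add_zero] at E1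
  have E2 := keyE p l mul (by omega) hinv 2 i j (by norm_num) (by omega) hi hj
  rw [hτ, if_pos (⟨by omega, by omega⟩ : (0:ℤ) ≤ τv + 2 ∧ τv + 2 < (p:ℤ))] at E2
  rw [R3, R4, mul_zero, mul_zero, add_zero] at E2
  have hμ : ((l:F)+1) * cc p l mul i j = 0 := by
    push_cast at E1 E2 ⊢
    linear_combination E2 - E1
  have hne : ((l:F)+1) ≠ 0 := by
    intro h
    apply cast_ne' (F := F) p (n := (l:ℤ)+1) (by omega) (by omega)
    push_cast
    linear_combination h
  exact (mul_eq_zero.mp hμ).resolve_left hne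

/-- One-step vanishing using k=1 when `τ = p-2`. -/
lemma one_step (i j : ℤ) (hi : 0 ≤ i ∧ i < p) (hj : 0 ≤ j ∧ j < p)
    (hτ : (i + j + (l:ℤ) + 1) % (p:ℤ) = (p:ℤ)-2)
    (R1 : cc p l mul (i+1) j = 0) (R2 : cc p l mul i (j+1) = 0) :
    cc p l mul i j = 0 := by
  have E1 := keyE p l mul (by omega) hinv 1 i j (by norm_num) (by omega) hi hj
  rw [hτ, if_pos (⟨by omega, by omega⟩ : (0:ℤ) ≤ (p:ℤ)-2 + 1 ∧ (p:ℤ)-2 + 1 < (p:ℤ))] at E1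
  rw [R1, R2, mul_zero, mul_zero, add_zero] at E1
  rw [show (p:ℤ)-2 + ((l:ℤ)+1)*(1+1) = (p:ℤ) + 2*(l:ℤ) by ring] at E1
  rcases mul_eq_zero.mp E1 with h | h
  · exfalso
    have hd : (p:ℤ) ∣ (p:ℤ) + 2*(l:ℤ) := (CharP.intCast_eq_zero_iff F p _).mp h
    have hd2 : (p:ℤ) ∣ 2*(l:ℤ) := by
      have := dvd_sub hd (dvd_refl (p:ℤ))
      rwa [show (p:ℤ) + 2*(l:ℤ) - (p:ℤ) = 2*(l:ℤ) by ring] at this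
    rcases Int.Prime.dvd_mul' hpp hd2 with h' | h'
    · have := Int.le_of_dvd (by norm_num) h'; omega
    · exact not_dvd_small p (by omega) (by omega) h'
  · exact h

/-- The diagonal `i + j = 2p - l - 2` vanishes when the corner `a₀` does. -/
lemma diagD (ha0 : cc p l mul ((p:ℤ)-1) 0 = 0) :
    ∀ m : ℕ, (m:ℤ) ≤ (l:ℤ) → ∀ i j : ℤ, i = (p:ℤ)-1-(m:ℤ) →
      j = 2*(p:ℤ)-(l:ℤ)-2-i → cc p l mul i j = 0 := by
  intro m
  induction m with
  | zero =>
    intro hm i j hi hj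
    have h := edge_zero p l mul hpp hp5 hl1 hl3 hinv ha0 (p-l-1) (by omega)
    have hi' : i = (p:ℤ)-1 := by omega
    have hj' : j = (((p-l-1 : ℕ)):ℤ) := by omega
    rw [hi', hj']
    exact h
  | succ m IHm =>
    intro hm i j hi hj
    set i1 : ℤ := i + 1 with hi1d
    have hi1 : i1 = (p:ℤ)-1-(m:ℤ) := by push_cast at hi; omega
    have hτ : (i1 + j + (l:ℤ) + 1) % (p:ℤ) = 0 :=
      emod_eq3 p (by omega) _ _ le_rfl (by omega) (Or.inr (Or.inr (by push_cast at hm; omega)))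
    have E := keyE p l mul (by omega) hinv (-1) i1 j (by norm_num) (by omega)
      ⟨by push_cast at hm; omega, by omega⟩ ⟨by push_cast at hm; omega, by push_cast at hm; omega⟩
    rw [hτ, if_neg (by omega)] at E
    have hprev : cc p l mul i1 (j + -1) = 0 :=
      IHm (by push_cast at hm; omega) i1 (j + -1) (by omega) (by omega)
    rw [hprev, mul_zero, add_zero, zero_mul] at E
    rw [show i1 + ((l:ℤ)+1)*(-1+1) = i1 by ring] at E
    have hcc : cc p l mul (i1 + -1) j = 0 := by
      rcases mul_eq_zero.mp E.symm with h | h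
      · exact absurd h (cast_ne' p (by push_cast at hm; omega) (by omega))
      · exact h
    rw [show i = i1 + -1 by omega]
    exact hcc

/-- The final sweep: everything vanishes. -/
lemma sweep (hD : ∀ i j : ℤ, 0 ≤ i → i < p → 0 ≤ j → j < p →
      i + j = 2*(p:ℤ)-(l:ℤ)-2 → cc p l mul i j = 0) :
    ∀ m : ℕ, ∀ i j : ℤ, 0 ≤ i → i < p → 0 ≤ j → j < p →
      (2*(p:ℤ)-2) - (i+j) = m → cc p l mul i j = 0 := by
  intro m
  induction m using Nat.strong_induction_on with
  | _ m IH =>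
    intro i j hi0 hi1 hj0 hj1 hm
    have IH' : ∀ i' j' : ℤ, 0 ≤ i' → i' < p → 0 ≤ j' → j' < p → i + j < i' + j' →
        cc p l mul i' j' = 0 := by
      intro i' j' h1 h2 h3 h4 h5
      exact IH ((2*(p:ℤ)-2) - (i'+j')).toNat (by omega) i' j' h1 h2 h3 h4 (by omega)
    have R1 : cc p l mul (i+1) j = 0 := by
      by_cases h : i+1 < p
      · exact IH' _ _ (by omega) h hj0 hj1 (by omega)
      · exact cc_left_out p l mul _ _ (by omega)
    have R2 : cc p l mul i (j+1) = 0 := by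
      by_cases h : j+1 < p
      · exact IH' _ _ hi0 hi1 (by omega) h (by omega)
      · exact cc_right_out p l mul _ _ (by omega)
    have R3 : cc p l mul (i+2) j = 0 := by
      by_cases h : i+2 < p
      · exact IH' _ _ (by omega) h hj0 hj1 (by omega)
      · exact cc_left_out p l mul _ _ (by omega)
    have R4 : cc p l mul i (j+2) = 0 := by
      by_cases h : j+2 < p
      · exact IH' _ _ hi0 hi1 (by omega) h (by omega)
      · exact cc_right_out p l mul _ _ (by omega)
    by_cases hc1 : i + j + (l:ℤ) + 1 ≤ (p:ℤ) - 1
    · exact low_zero p l mul hpp hp5 hl1 hl3 hinv (i+j).toNat i j hi0 hi1 hj0 hj1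
        (by omega) (by omega)
    · by_cases hc2 : i + j + (l:ℤ) + 1 = 2*(p:ℤ) - 1
      · exact hD i j hi0 hi1 hj0 hj1 (by omega)
      · by_cases hc3 : i + j + (l:ℤ) + 1 ≤ 2*(p:ℤ) - 1
        · have hτ : (i + j + (l:ℤ) + 1) % (p:ℤ) = i + j + (l:ℤ) + 1 - p :=
            emod_eq3 p (by omega) _ _ (by omega) (by omega) (Or.inr (Or.inl (by ring)))
          by_cases hc4 : i + j + (l:ℤ) + 1 = 2*(p:ℤ) - 2
          · exact one_step p l mul hpp hp5 hl1 hl3 hinv i j ⟨hi0, hi1⟩ ⟨hj0, hj1⟩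
              (by rw [hτ]; omega) R1 R2
          · exact two_step p l mul hpp hp5 hl1 hl3 hinv i j _ ⟨hi0, hi1⟩ ⟨hj0, hj1⟩
              hτ (by omega) (by omega) R1 R2 R3 R4
        · have hτ : (i + j + (l:ℤ) + 1) % (p:ℤ) = i + j + (l:ℤ) + 1 - 2*p :=
            emod_eq3 p (by omega) _ _ (by omega) (by omega) (Or.inr (Or.inr (by ring)))
          exact two_step p l mul hpp hp5 hl1 hl3 hinv i j _ ⟨hi0, hi1⟩ ⟨hj0, hj1⟩
            hτ (by omega) (by omega) R1 R2 R3 R4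

end phases
end withMul
end S9


/-- If, for `l ∈ {1, ..., p-3}`, the Verma module `L(l)` for the Witt algebra over an
algebraically closed field of characteristic `p ≥ 5` admits a nonzero `W`-invariant bilinear
product, then `p = 7` and `l = 3`. -/
theorem stmt9 (p : ℕ) (hp : p.Prime) (hp5 : 5 ≤ p)
    (F : Type*) [Field F] [IsAlgClosed F] [CharP F p]
    (l : ℕ) (hl1 : 1 ≤ l) (hl3 : l ≤ p - 3)
    (mul : (Fin p → F) →ₗ[F] (Fin p → F) →ₗ[F] (Fin p → F))
    (hmul : mul ≠ 0)
    (hinv : ∀ k : ℤ, -1 ≤ k → k ≤ (p : ℤ) - 2 → ∀ u v : Fin p → F,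
      Eop F p l k (mul u v) = mul (Eop F p l k u) v + mul u (Eop F p l k v)) :
    p = 7 ∧ l = 3 := by
  have hl3' : l + 3 ≤ p := by omega
  by_cases ha0 : S9.cc p l mul ((p:ℤ)-1) 0 = 0
  · exfalso
    apply hmul
    apply S9.mul_eq_zero_of p l mul (by omega) hinv
    intro i j hi0 hi1 hj0 hj1
    have hD : ∀ i' j' : ℤ, 0 ≤ i' → i' < p → 0 ≤ j' → j' < p →
        i' + j' = 2*(p:ℤ)-(l:ℤ)-2 → S9.cc p l mul i' j' = 0 := by
      intro i' j' h1 h2 h3 h4 h5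
      exact S9.diagD p l mul hp hp5 hl1 hl3' hinv ha0 ((p:ℤ)-1-i').toNat (by omega) i' j'
        (by omega) (by omega)
    exact S9.sweep p l mul hp hp5 hl1 hl3' hinv hD ((2*(p:ℤ)-2)-(i+j)).toNat i j
      hi0 hi1 hj0 hj1 (by omega)
  · exact S9.edge_case p l mul hp hp5 hl1 hl3' hinv ha0
end

section
/- Let C be a Cayley (octonion) algebra over a field F of characteristic 2, with norm q and trace t. Then 1 ∈ C⁰ := {x ∈ C : t(x) = 0}, every derivation d of C annihilates 1 and preserves C⁰, and the induced endomorphism of the 6-dimensional quotient C⁰/F·1 lies in the symplectic Lie algebra sp(C⁰/F1, b̃), where b̃ is the nondegenerate alternating form induced by the polar form b_q of q. Moreover, the resulting Lie algebra homomorphism Der(C) → sp(C⁰/F1, b̃) is injective. -/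
open QuadraticMap Submodule


/-- Let `C` be a Cayley algebra over a field `F` of characteristic 2: an
8-dimensional unital (not necessarily associative) `F`-algebra with a multiplicative
quadratic form `q` whose polar form is nondegenerate.  Write `C⁰ = {x : polar q x 1 = 0}`
for the trace-zero subspace and `Der = {d : d(xy) = d(x)y + x d(y)}` for the derivations.
Then: `1 ∈ C⁰`;  every derivation annihilates `1` and preserves `C⁰`;  the polar form
vanishes on `(1, C⁰)` and is alternating on `C⁰` (so it induces a form `b̃` on `C⁰/F1`);
each derivation satisfies the symplectic condition for `b̃` on `C⁰` (i.e. the induced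
endomorphism of `C⁰/F1` lies in `sp(C⁰/F1, b̃)`);  `b̃` is nondegenerate (an element of `C⁰`
orthogonal to all of `C⁰` lies in `F·1`);  and the resulting homomorphism
`Der(C) → sp(C⁰/F1, b̃)` is injective (a derivation mapping `C⁰` into `F·1` is zero). -/
theorem stmt17 (F : Type*) [Field F] [CharP F 2]
    (C : Type*) [NonAssocRing C] [Module F C] [SMulCommClass F C C] [IsScalarTower F C C]
    (hdim : Module.finrank F C = 8)
    (q : QuadraticForm F C)
    (hmul : ∀ x y : C, q (x * y) = q x * q y)
    (hnd : ∀ x : C, (∀ y : C, QuadraticMap.polar q x y = 0) → x = 0) :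
    (QuadraticMap.polar q (1 : C) 1 = 0) ∧
    (∀ d : Module.End F C, (∀ a b : C, d (a * b) = d a * b + a * d b) →
      d 1 = 0) ∧
    (∀ d : Module.End F C, (∀ a b : C, d (a * b) = d a * b + a * d b) →
      ∀ x : C, QuadraticMap.polar q x 1 = 0 → QuadraticMap.polar q (d x) 1 = 0) ∧
    (∀ y : C, QuadraticMap.polar q y 1 = 0 → QuadraticMap.polar q (1 : C) y = 0) ∧
    (∀ x : C, QuadraticMap.polar q x 1 = 0 → QuadraticMap.polar q x x = 0) ∧
    (∀ d : Module.End F C, (∀ a b : C, d (a * b) = d a * b + a * d b) →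
      ∀ x y : C, QuadraticMap.polar q x 1 = 0 → QuadraticMap.polar q y 1 = 0 →
        QuadraticMap.polar q (d x) y + QuadraticMap.polar q x (d y) = 0) ∧
    (∀ x : C, QuadraticMap.polar q x 1 = 0 →
      (∀ y : C, QuadraticMap.polar q y 1 = 0 → QuadraticMap.polar q x y = 0) →
      ∃ a : F, x = a • (1 : C)) ∧
    (∀ d : Module.End F C, (∀ a b : C, d (a * b) = d a * b + a * d b) →
      (∀ x : C, QuadraticMap.polar q x 1 = 0 → ∃ a : F, d x = a • (1 : C)) → d = 0) := by
  classical
  haveI : FiniteDimensional F C := FiniteDimensional.of_finrank_pos (by rw [hdim]; norm_num)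
  have hF2 : (2 : F) = 0 := CharTwo.two_eq_zero
  have hFadd : ∀ a : F, a + a = 0 := fun a => by rw [← two_mul, hF2, zero_mul]
  have h2C : ∀ z : C, z + z = 0 := fun z => by
    rw [← two_smul F z, hF2, zero_smul]
  have h2n : ∀ z : C, (2 : ℕ) • z = 0 := fun z => by rw [two_nsmul]; exact h2C z
  have h2z : ∀ z : C, (2 : ℤ) • z = 0 := fun z => by
    rw [two_zsmul]; exact h2C z
  have hnegC : ∀ z : C, -z = z := fun z => neg_eq_of_add_eq_zero_left (h2C z)
  have hone : (1 : C) ≠ 0 := by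
    intro h
    have hall : ∀ x : C, x = 0 := fun x => by rw [← mul_one x, h, mul_zero]
    have : Subsingleton C := subsingleton_of_forall_eq 0 fun x => hall x
    rw [Module.finrank_zero_of_subsingleton] at hdim
    exact absurd hdim (by norm_num)
  have hsmul1 : ∀ c : F, c • (1 : C) = 0 → c = 0 := by
    intro c h
    by_contra hc
    exact hone (by rw [← one_smul F (1 : C), ← inv_mul_cancel₀ hc, mul_smul, h, smul_zero])
  have hqadd : ∀ x y : C, q (x + y) = q x + q y + polar q x y := by
    intro x y; simp only [QuadraticMap.polar]; ring
  have hb1 : ∀ x y z : C, polar q (x * y) (x * z) = q x * polar q y z := by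
    intro x y z
    simp only [QuadraticMap.polar, ← mul_add, hmul]; ring
  have hb3 : ∀ x w y z : C,
      polar q (x * y) (w * z) + polar q (w * y) (x * z) = polar q x w * polar q y z := by
    intro x w y z
    have e := hb1 (x + w) y z
    rw [add_mul, add_mul, polar_add_left, polar_add_right, polar_add_right, hb1, hb1,
      hqadd] at e
    linear_combination e
  have hB : ∀ x y z : C, polar q (x * y) z + polar q y (x * z) = polar q x 1 * polar q y z := by
    intro x y z
    have := hb3 x 1 y z
    rwa [one_mul, one_mul] at this
  have hA : ∀ x y z : C, polar q (x * y) z + polar q (z * y) x = polar q x z * polar q y 1 := by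
    intro x y z
    have := hb3 x z y 1
    rwa [mul_one, mul_one] at this
  have hCH : ∀ x : C, x * x = polar q x 1 • x + q x • (1 : C) := by
    intro x
    have hE : ∀ z : C, polar q (x * x + (polar q x 1 • x + q x • (1 : C))) z = 0 := by
      intro z
      rw [polar_add_left, polar_add_left, polar_smul_left, polar_smul_left, smul_eq_mul,
        smul_eq_mul]
      have h1 := hB x x z
      have h2 : polar q x (x * z) = q x * polar q 1 z := by
        have := hb1 x 1 z; rwa [mul_one] at this
      linear_combination (polar q x 1 * polar q x z) * hF2 + h1 - h2
    have hz := hnd _ hE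
    rw [add_eq_zero_iff_eq_neg] at hz
    rw [hz, hnegC]
  have hCHlin : ∀ x y : C,
      x * y + y * x = polar q x 1 • y + polar q y 1 • x + polar q x y • (1 : C) := by
    intro x y
    have key : x * y + y * x = (x + y) * (x + y) + (x * x + y * y) := by
      rw [mul_add, add_mul, add_mul]
      abel_nf
      simp [h2n, h2z]
    rw [key, hCH (x + y), hCH x, hCH y, polar_add_left, hqadd, add_smul, smul_add, smul_add,
      add_smul, add_smul]
    abel_nf
    simp [h2n, h2z]
  have hd1 : ∀ d : Module.End F C, (∀ a b : C, d (a * b) = d a * b + a * d b) → d 1 = 0 := by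
    intro d hd
    have h := hd 1 1
    rw [one_mul, mul_one, one_mul] at h
    exact h.trans (h2C _)
  have hstar : ∀ d : Module.End F C, (∀ a b : C, d (a * b) = d a * b + a * d b) →
      ∀ x y : C, polar q (d x) 1 • y + polar q (d y) 1 • x
        + (polar q (d x) y + polar q x (d y)) • (1 : C) = 0 := by
    intro d hd x y
    have i : d (x * y) + d (y * x) = polar q x 1 • d y + polar q y 1 • d x := by
      have := congrArg d (hCHlin x y)
      simp only [map_add, _root_.map_smul, hd1 d hd, smul_zero, add_zero] at this
      exact this
    rw [hd x y, hd y x] at i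
    have ii := hCHlin (d x) y
    have iii := hCHlin x (d y)
    have e5 : polar q x 1 • d y + polar q y 1 • d x =
        (polar q (d x) 1 • y + polar q y 1 • d x + polar q (d x) y • (1 : C)) +
        (polar q x 1 • d y + polar q (d y) 1 • x + polar q x (d y) • (1 : C)) := by
      rw [← ii, ← iii, ← i]; abel
    have e6 : polar q (d x) 1 • y + polar q (d y) 1 • x
        + (polar q (d x) y + polar q x (d y)) • (1 : C) =
        ((polar q (d x) 1 • y + polar q y 1 • d x + polar q (d x) y • (1 : C)) +
        (polar q x 1 • d y + polar q (d y) 1 • x + polar q x (d y) • (1 : C)))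
        + (polar q x 1 • d y + polar q y 1 • d x) := by
      rw [add_smul]
      abel_nf
      simp [h2n, h2z]
    rw [e6, ← e5, h2C]
  have htd : ∀ d : Module.End F C, (∀ a b : C, d (a * b) = d a * b + a * d b) →
      ∀ x : C, polar q (d x) 1 = 0 := by
    intro d hd x
    by_contra h
    have hspan : ∀ y : C, y ∈ span F ({x, (1 : C)} : Set C) := by
      intro y
      have hs := hstar d hd x y
      rw [add_assoc, add_eq_zero_iff_eq_neg, hnegC] at hs
      have : y = (polar q (d x) 1)⁻¹ •
          (polar q (d y) 1 • x + (polar q (d x) y + polar q x (d y)) • (1 : C)) := by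
        rw [← hs, ← mul_smul, inv_mul_cancel₀ h, one_smul]
      rw [this]
      exact smul_mem _ _ (add_mem (smul_mem _ _ (subset_span (by simp)))
        (smul_mem _ _ (subset_span (by simp))))
    have htop : span F ({x, (1 : C)} : Set C) = ⊤ := eq_top_iff.2 fun y _ => hspan y
    have hlt := span_lt_top_of_card_lt_finrank
      (s := ({x, (1 : C)} : Set C)) (by
        rw [hdim]
        calc ({x, (1:C)} : Set C).toFinset.card ≤ 2 := by
              rw [Set.toFinset_insert]
              exact (Finset.card_insert_le _ _).trans (by simp)
          _ < 8 := by norm_num)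
    exact hlt.ne htop
  have hskew : ∀ d : Module.End F C, (∀ a b : C, d (a * b) = d a * b + a * d b) →
      ∀ x y : C, polar q (d x) y + polar q x (d y) = 0 := by
    intro d hd x y
    have hs := hstar d hd x y
    rw [htd d hd, htd d hd, zero_smul, zero_smul, zero_add, zero_add] at hs
    exact hsmul1 _ hs
  -- existence of a trace-one element
  obtain ⟨e, he⟩ : ∃ e : C, polar q e 1 = 1 := by
    by_contra h
    push_neg at h
    have hz : ∀ z : C, polar q z 1 = 0 := by
      intro z
      by_contra hz
      exact h ((polar q z 1)⁻¹ • z)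
        (by rw [polar_smul_left, smul_eq_mul, inv_mul_cancel₀ hz])
    exact hone (hnd 1 fun y => by rw [polar_comm]; exact hz y)
  -- G7 : nondegeneracy modulo F·1
  have hG7 : ∀ x : C, polar q x 1 = 0 →
      (∀ y : C, polar q y 1 = 0 → polar q x y = 0) → ∃ a : F, x = a • (1 : C) := by
    intro x hx H
    refine ⟨polar q x e, ?_⟩
    have key : ∀ y : C, polar q (x + polar q x e • (1 : C)) y = 0 := by
      intro y
      have hy0 : polar q (y + polar q y 1 • e) 1 = 0 := by
        rw [polar_add_left, polar_smul_left, he, smul_eq_mul, mul_one]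
        exact hFadd _
      have h1 := H _ hy0
      rw [polar_add_right, polar_smul_right, smul_eq_mul] at h1
      -- h1 : polar x y + polar y 1 * polar x e = 0
      rw [polar_add_left, polar_smul_left, smul_eq_mul, polar_comm (⇑q) 1 y]
      linear_combination h1 + (polar q y 1 * polar q x e) * (hFadd 1 : (1:F)+1 = 0) - (polar q y 1 * polar q x e) * (hFadd 1)
    have := hnd _ key
    rw [add_eq_zero_iff_eq_neg, hnegC] at this
    exact this
  -- G8 : injectivity
  have hG8 : ∀ d : Module.End F C, (∀ a b : C, d (a * b) = d a * b + a * d b) →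
      (∀ x : C, polar q x 1 = 0 → ∃ a : F, d x = a • (1 : C)) → d = 0 := by
    intro d hd h
    -- Step A : d vanishes on the trace-zero hyperplane
    have hd0 : ∀ x : C, polar q x 1 = 0 → d x = 0 := by
      by_contra hA
      push_neg at hA
      obtain ⟨x₀, hx₀, hdx₀⟩ := hA
      obtain ⟨a₀, ha₀⟩ := h x₀ hx₀
      have ha₀ne : a₀ ≠ 0 := fun h0 => hdx₀ (by rw [ha₀, h0, zero_smul])
      set x : C := a₀⁻¹ • x₀ with hxdef
      have hx : polar q x 1 = 0 := by
        rw [hxdef, polar_smul_left, hx₀, smul_zero]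
      have hdx : d x = 1 := by
        rw [hxdef, _root_.map_smul, ha₀, ← mul_smul, inv_mul_cancel₀ ha₀ne, one_smul]
      -- every trace-zero y lies in span {x, 1, d e}
      have hspan : ∀ y : C, polar q y 1 = 0 → y ∈ span F ({x, (1:C), d e} : Set C) := by
        intro y hy
        obtain ⟨ay, hay⟩ := h y hy
        set c : F := polar q (x * y) 1 with hcdef
        have hp0 : polar q (x * y + c • e) 1 = 0 := by
          rw [polar_add_left, polar_smul_left, he, smul_eq_mul, mul_one, ← hcdef]
          exact hFadd c
        obtain ⟨ap, hap⟩ := h _ hp0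
        have hxy : x * y = (x * y + c • e) + c • e := by
          rw [add_assoc, ← add_smul, hFadd, zero_smul, add_zero]
        have e1 : d (x * y) = ap • (1 : C) + c • d e := by
          rw [hxy, map_add, _root_.map_smul, hap]
        have e2 : d (x * y) = y + ay • x := by
          rw [hd x y, hdx, one_mul, hay, mul_smul_comm, mul_one]
        have : y = ay • x + (ap • (1 : C) + c • d e) := by
          rw [← e1, e2,
            show ay • x + (y + ay • x) = y + (ay • x + ay • x) from by abel, h2C, add_zero]
        rw [this]
        refine add_mem (smul_mem _ _ (subset_span (by simp)))
          (add_mem (smul_mem _ _ (subset_span (by simp)))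
            (smul_mem _ _ (subset_span (by simp))))
      -- dimension count
      set T : C →ₗ[F] F := q.polarBilin.flip 1 with hT
      have hker : LinearMap.ker T ≤ span F ({x, (1:C), d e} : Set C) := by
        intro y hy
        have : polar q y 1 = 0 := by
          simpa [hT, QuadraticMap.polarBilin_apply_apply] using hy
        exact hspan y this
      have h7 : 7 ≤ Module.finrank F (LinearMap.ker T) := by
        have := LinearMap.finrank_range_add_finrank_ker T
        have hr : Module.finrank F (LinearMap.range T) ≤ 1 := by
          simpa using Submodule.finrank_le (LinearMap.range T)
        omega
      have h3 : Module.finrank F (span F ({x, (1:C), d e} : Set C)) ≤ 3 := by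
        refine (finrank_span_le_card _).trans ?_
        rw [Set.toFinset_insert, Set.toFinset_insert]
        refine (Finset.card_insert_le _ _).trans ?_
        have h2 := Finset.card_insert_le (1:C) ({d e} : Set C).toFinset
        simp at h2 ⊢
        omega
      have := Submodule.finrank_mono hker
      omega
    -- Step B : d e = 0
    have hde1 : polar q (d e) 1 = 0 := htd d hd e
    have hdeC0 : ∀ y : C, polar q y 1 = 0 → polar q (d e) y = 0 := by
      intro y hy
      have hs := hskew d hd e y
      rwa [hd0 y hy, polar_zero_right, add_zero] at hs
    obtain ⟨cF, hc⟩ := hG7 (d e) hde1 hdeC0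
    have hde : d e = 0 := by
      have hee := hCH e
      rw [he, one_smul] at hee
      have e1 : d (e * e) = d e := by
        rw [hee, map_add, _root_.map_smul, hd1 d hd, smul_zero, add_zero]
      have e2 : d (e * e) = 0 := by
        rw [hd e e, hc, smul_mul_assoc, one_mul, mul_smul_comm, mul_one, ← smul_add,
          h2C, smul_zero]
      exact e1.symm.trans e2
    -- Step C : d vanishes everywhere
    ext z
    have hz0 : polar q (z + polar q z 1 • e) 1 = 0 := by
      rw [polar_add_left, polar_smul_left, he, smul_eq_mul, mul_one]
      exact hFadd _
    have hzz : d (z + polar q z 1 • e) + polar q z 1 • d e = d z := by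
      rw [map_add, _root_.map_smul, add_assoc, ← smul_add, h2C, smul_zero, add_zero]
    rw [LinearMap.zero_apply, ← hzz, hd0 _ hz0, hde, smul_zero, add_zero]
  refine ⟨?_, hd1, fun d hd x _ => htd d hd x, ?_, ?_, fun d hd x y _ _ => hskew d hd x y, hG7, hG8⟩
  · rw [polar_self, two_nsmul]; exact hFadd _
  · intro y hy; rw [polar_comm]; exact hy
  · intro x _; rw [polar_self, two_nsmul]; exact hFadd _
end
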